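/- arXiv:2306.08979 — 2 statements merged into one kernel-verified Lean document; each statement's English description precedes it below -/
import Mathlib

section
/- Let Q̂_m and Q_∞ be functions on a compact rectangle R = [a₁, b₁] × [a₂, b₂] ⊂ ℝ² such that: (i) Q̂_m is coordinatewise monotone (nonincreasing in each argument), (ii) Q_∞ is continuous (hence uniformly continuous) on R, and (iii) Q̂_m(c) → Q_∞(c) pointwise for every c ∈ R. Then Q̂_m → Q_∞ uniformly on R. -/
open Filter

/-- Two-dimensional Dini/Pólya theorem: if each `Q̂_m` is coordinatewise nonincreasing
on a compact rectangle, `Q_∞` is continuous there, and `Q̂_m → Q_∞` pointwise, then the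
convergence is uniform on the rectangle. -/
theorem dini_polya_uniform_convergence
    (a b : ℝ × ℝ) (hab : a ≤ b)
    (Qhat : ℕ → ℝ × ℝ → ℝ) (Qinf : ℝ × ℝ → ℝ)
    (hmono : ∀ m, ∀ c ∈ Set.Icc a b, ∀ c' ∈ Set.Icc a b, c ≤ c' → Qhat m c' ≤ Qhat m c)
    (hcont : ContinuousOn Qinf (Set.Icc a b))
    (hptwise : ∀ c ∈ Set.Icc a b, Tendsto (fun m => Qhat m c) atTop (nhds (Qinf c))) :
    TendstoUniformlyOn Qhat Qinf atTop (Set.Icc a b) := by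
  rw [Metric.tendstoUniformlyOn_iff]
  intro ε hε
  have hK : IsCompact (Set.Icc a b) := isCompact_Icc
  have hUC := hK.uniformContinuousOn_of_continuous hcont
  rw [Metric.uniformContinuousOn_iff] at hUC
  obtain ⟨δ, hδ, hδε⟩ := hUC (ε/2) (by linarith)
  set η : ℝ := δ/2 with hηdef
  have hη0 : 0 < η := by positivity
  obtain ⟨F, hFsub, hFfin, hFcov⟩ :=
    hK.finite_cover_balls hη0
  set u : ℝ × ℝ → ℝ × ℝ := fun c => (max a.1 (c.1 - η), max a.2 (c.2 - η)) with hu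
  set v : ℝ × ℝ → ℝ × ℝ := fun c => (min b.1 (c.1 + η), min b.2 (c.2 + η)) with hv
  have humem : ∀ c ∈ Set.Icc a b, u c ∈ Set.Icc a b := by
    intro c hc
    refine ⟨⟨le_max_left _ _, le_max_left _ _⟩, ⟨max_le hab.1 ?_, max_le hab.2 ?_⟩⟩
    · have := hc.2.1; linarith
    · have := hc.2.2; linarith
  have hvmem : ∀ c ∈ Set.Icc a b, v c ∈ Set.Icc a b := by
    intro c hc
    refine ⟨⟨le_min hab.1 ?_, le_min hab.2 ?_⟩, ⟨min_le_left _ _, min_le_left _ _⟩⟩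
    · have := hc.1.1; linarith
    · have := hc.1.2; linarith
  have hud : ∀ c ∈ Set.Icc a b, dist (u c) c ≤ η := by
    intro c hc
    rw [Prod.dist_eq]
    have h1 : a.1 ≤ c.1 := hc.1.1
    have h2 : a.2 ≤ c.2 := hc.1.2
    refine max_le ?_ ?_ <;> rw [Real.dist_eq, abs_le] <;> constructor
    · have : c.1 - η ≤ max a.1 (c.1 - η) := le_max_right _ _; linarith
    · have : max a.1 (c.1 - η) ≤ c.1 := max_le h1 (by linarith); linarith
    · have : c.2 - η ≤ max a.2 (c.2 - η) := le_max_right _ _; linarith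
    · have : max a.2 (c.2 - η) ≤ c.2 := max_le h2 (by linarith); linarith
  have hvd : ∀ c ∈ Set.Icc a b, dist (v c) c ≤ η := by
    intro c hc
    rw [Prod.dist_eq]
    have h1 : c.1 ≤ b.1 := hc.2.1
    have h2 : c.2 ≤ b.2 := hc.2.2
    refine max_le ?_ ?_ <;> rw [Real.dist_eq, abs_le] <;> constructor
    · have : c.1 ≤ min b.1 (c.1 + η) := le_min h1 (by linarith); linarith
    · have : min b.1 (c.1 + η) ≤ c.1 + η := min_le_right _ _; linarith
    · have : c.2 ≤ min b.2 (c.2 + η) := le_min h2 (by linarith); linarith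
    · have : min b.2 (c.2 + η) ≤ c.2 + η := min_le_right _ _; linarith
  -- eventual closeness on the finite grid
  have hgrid : ∀ᶠ m in atTop, ∀ c ∈ F,
      |Qhat m (u c) - Qinf (u c)| < ε/2 ∧ |Qhat m (v c) - Qinf (v c)| < ε/2 := by
    rw [Filter.eventually_all_finite hFfin]
    intro c hcF
    have hc : c ∈ Set.Icc a b := hFsub hcF
    have h1 := (Metric.tendsto_nhds.mp (hptwise (u c) (humem c hc))) (ε/2) (by linarith)
    have h2 := (Metric.tendsto_nhds.mp (hptwise (v c) (hvmem c hc))) (ε/2) (by linarith)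
    filter_upwards [h1, h2] with m hm1 hm2
    rw [Real.dist_eq] at hm1 hm2
    exact ⟨hm1, hm2⟩
  filter_upwards [hgrid] with m hm x hx
  obtain ⟨c, hcF, hxc⟩ := Set.mem_iUnion₂.mp (hFcov hx)
  have hc : c ∈ Set.Icc a b := hFsub hcF
  have hxcd : dist x c < η := Metric.mem_ball.mp hxc
  have hx1 : |x.1 - c.1| < η := by
    have h : dist x.1 c.1 ≤ dist x c := by rw [Prod.dist_eq]; exact le_max_left _ _
    have := h.trans_lt hxcd; rwa [Real.dist_eq] at this
  have hx2 : |x.2 - c.2| < η := by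
    have h : dist x.2 c.2 ≤ dist x c := by rw [Prod.dist_eq]; exact le_max_right _ _
    have := h.trans_lt hxcd; rwa [Real.dist_eq] at this
  have hx1' := abs_lt.mp hx1
  have hx2' := abs_lt.mp hx2
  have hule : u c ≤ x := by
    rw [Prod.le_def]
    constructor
    · exact max_le hx.1.1 (by linarith [hx1'.2])
    · exact max_le hx.1.2 (by linarith [hx2'.2])
  have hxle : x ≤ v c := by
    rw [Prod.le_def]
    constructor
    · exact le_min hx.2.1 (by linarith [hx1'.1])
    · exact le_min hx.2.2 (by linarith [hx2'.1])
  have hQu : Qhat m x ≤ Qhat m (u c) := hmono m (u c) (humem c hc) x hx hule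
  have hQv : Qhat m (v c) ≤ Qhat m x := hmono m x hx (v c) (hvmem c hc) hxle
  have hdu : dist (u c) x < δ := by
    calc dist (u c) x ≤ dist (u c) c + dist c x := dist_triangle _ _ _
    _ < η + η := by
        have : dist c x < η := by rwa [dist_comm]
        have h := hud c hc
        linarith
    _ = δ := by rw [hηdef]; ring
  have hdv : dist (v c) x < δ := by
    calc dist (v c) x ≤ dist (v c) c + dist c x := dist_triangle _ _ _
    _ < η + η := by
        have : dist c x < η := by rwa [dist_comm]
        have h := hvd c hc
        linarith
    _ = δ := by rw [hηdef]; ring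
  have hQcu : |Qinf (u c) - Qinf x| < ε/2 := by
    have := hδε (u c) (humem c hc) x hx hdu
    rwa [Real.dist_eq] at this
  have hQcv : |Qinf (v c) - Qinf x| < ε/2 := by
    have := hδε (v c) (hvmem c hc) x hx hdv
    rwa [Real.dist_eq] at this
  obtain ⟨hg1, hg2⟩ := hm c hcF
  rw [Real.dist_eq, abs_lt]
  have a1 := abs_lt.mp hg1
  have a2 := abs_lt.mp hg2
  have a3 := abs_lt.mp hQcu
  have a4 := abs_lt.mp hQcv
  constructor <;> [nlinarith [a2.1, a4.1, hQv]; nlinarith [a1.2, a3.2, hQu]]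
end

section
/- Oracle agreeability: Consider m units with statistics (X_i, Clfdr_i) and fixed constants μ₀, α. Partition the units into: group 0 (X_i ≥ μ₀ and Clfdr_i ≤ α), group 1 (X_i ≥ μ₀ and Clfdr_i > α), group 2 (X_i < μ₀ and Clfdr_i ≤ α), group 3 (X_i < μ₀ and Clfdr_i > α). Define T_i = (X_i − μ₀)/(Clfdr_i − α) and the selection rule δ(c₁,c₂): select all of group 0; select i in group 1 iff T_i > c₁; select i in group 2 iff T_i < c₂; never select group 3. Then the rule is agreeable: if X_i > X_j and Clfdr_i < Clfdr_j and unit j is selected, then unit i is selected (for any thresholds c₁, c₂). -/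
/-- The oracle selection rule: select group 0 (`X ≥ μ₀`, `Clfdr ≤ α`) always; select
group 1 (`X ≥ μ₀`, `Clfdr > α`) iff `T > c₁`; select group 2 (`X < μ₀`, `Clfdr ≤ α`)
iff `T < c₂`; never select group 3, where `T = (X - μ₀)/(Clfdr - α)`. -/
def selectedRule (μ₀ α c₁ c₂ x clfdr : ℝ) : Prop :=
  (μ₀ ≤ x ∧ clfdr ≤ α) ∨
  (μ₀ ≤ x ∧ α < clfdr ∧ c₁ < (x - μ₀) / (clfdr - α)) ∨
  (x < μ₀ ∧ clfdr ≤ α ∧ (x - μ₀) / (clfdr - α) < c₂)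

/-- Agreeability of the oracle rule: if `X_i > X_j` and `Clfdr_i < Clfdr_j`, and unit
`j` is selected, then unit `i` is selected (for any thresholds `c₁, c₂`). -/
theorem oracle_rule_agreeable {m : ℕ} (X Clfdr : Fin m → ℝ) (μ₀ α c₁ c₂ : ℝ)
    (hC01 : ∀ i, Clfdr i ∈ Set.Icc (0 : ℝ) 1)
    (hCne : ∀ i, Clfdr i ≠ α) (hXne : ∀ i, X i ≠ μ₀)
    (i j : Fin m) (hX : X j < X i) (hCl : Clfdr i < Clfdr j)
    (hj : selectedRule μ₀ α c₁ c₂ (X j) (Clfdr j)) :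
    selectedRule μ₀ α c₁ c₂ (X i) (Clfdr i) := by
  unfold selectedRule at hj ⊢
  rcases hj with ⟨hx, hc⟩ | ⟨hx, hc, hT⟩ | ⟨hx, hc, hT⟩
  · exact Or.inl ⟨le_of_lt (lt_of_le_of_lt hx hX), le_of_lt (lt_of_lt_of_le hCl hc)⟩
  · -- j in group 1
    have hxi : μ₀ ≤ X i := le_of_lt (lt_of_le_of_lt hx hX)
    rcases le_or_gt (Clfdr i) α with hci | hci
    · exact Or.inl ⟨hxi, hci⟩
    · refine Or.inr (Or.inl ⟨hxi, hci, lt_trans hT ?_⟩)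
      have hxj : μ₀ < X j := lt_of_le_of_ne hx (Ne.symm (hXne j))
      rw [div_lt_div_iff₀ (by linarith) (by linarith)]
      nlinarith
  · -- j in group 2
    have hci : Clfdr i < α := lt_of_lt_of_le hCl hc
    rcases le_or_gt μ₀ (X i) with hxi | hxi
    · exact Or.inl ⟨hxi, le_of_lt hci⟩
    · refine Or.inr (Or.inr ⟨hxi, le_of_lt hci, lt_trans ?_ hT⟩)
      have hcj : Clfdr j < α := lt_of_le_of_ne hc (hCne j)
      have e1 : (X i - μ₀) / (Clfdr i - α) = (μ₀ - X i) / (α - Clfdr i) := by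
        rw [div_eq_div_iff (by linarith) (by linarith)]; ring
      have e2 : (X j - μ₀) / (Clfdr j - α) = (μ₀ - X j) / (α - Clfdr j) := by
        rw [div_eq_div_iff (by linarith) (by linarith)]; ring
      rw [e1, e2, div_lt_div_iff₀ (by linarith) (by linarith)]
      nlinarith
end
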